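/- arXiv:1011.0612 — 3 statements merged into one kernel-verified Lean document; each statement's English description precedes it below -/
import Mathlib

section
/- Let n ≥ 1 and let f ∈ M_n be a fixed-point-free involution of Fin(2n) × Fin(3) such that the graph on the vertex set Fin(2n), in which v is adjacent to w if and only if f matches some half-edge of v to some half-edge of w, is connected. Then the stabilizer of f under the conjugation action of G_n has cardinality at most 2n·6^{2n}. -/
/-- Let `f` be a fixed-point-free involution of the half-edge set `Fin (2n) × Fin 3`
(encoding a trivalent multigraph on the `2n` vertices `Fin (2n)`, where vertex `v`
carries the half-edges `(v,0), (v,1), (v,2)`).  Suppose the associated graph on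
`Fin (2n)` — in which `v` is adjacent to `w` iff `f` matches some half-edge of `v`
to some half-edge of `w` — is connected.  Then the stabilizer of `f` under the
conjugation action of the vertex-respecting permutation group `G_n` has cardinality
at most `2n · 6^{2n}`. -/
theorem stabilizer_card_le (n : ℕ) (hn : 1 ≤ n)
    (f : Equiv.Perm (Fin (2 * n) × Fin 3))
    (hf : f * f = 1 ∧ ∀ x, f x ≠ x)
    (hconn : (SimpleGraph.fromRel
      (fun v w : Fin (2 * n) => ∃ i j : Fin 3, f (v, i) = (w, j))).Connected) :
    Nat.card {σ : Equiv.Perm (Fin (2 * n) × Fin 3) //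
        (∃ π : Equiv.Perm (Fin (2 * n)), ∀ p : Fin (2 * n) × Fin 3, (σ p).1 = π p.1) ∧
        σ * f * σ⁻¹ = f} ≤ 2 * n * 6 ^ (2 * n) := by
  have h2n : 0 < 2 * n := by omega
  set v0 : Fin (2 * n) := ⟨0, h2n⟩ with hv0
  set G := SimpleGraph.fromRel
      (fun v w : Fin (2 * n) => ∃ i j : Fin 3, f (v, i) = (w, j)) with hG
  set S := {σ : Equiv.Perm (Fin (2 * n) × Fin 3) //
        (∃ π : Equiv.Perm (Fin (2 * n)), ∀ p : Fin (2 * n) × Fin 3, (σ p).1 = π p.1) ∧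
        σ * f * σ⁻¹ = f} with hS
  -- each stabilizer element gives a permutation of half-edges at each vertex
  have hbij : ∀ (σ : S) (v : Fin (2 * n)),
      Function.Bijective (fun i : Fin 3 => (σ.1 (v, i)).2) := by
    intro σ v
    rw [← Finite.injective_iff_bijective]
    obtain ⟨π, hπ⟩ := σ.2.1
    intro i j hij
    have h1 : σ.1 (v, i) = σ.1 (v, j) := by
      apply Prod.ext _ hij
      rw [hπ (v, i), hπ (v, j)]
    have := σ.1.injective h1
    exact (Prod.mk.injEq _ _ _ _).mp this |>.2
  let F : S → Fin (2 * n) × (Fin (2 * n) → Equiv.Perm (Fin 3)) :=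
    fun σ => ((σ.1 (v0, 0)).1, fun v => Equiv.ofBijective _ (hbij σ v))
  have hinj : Function.Injective F := by
    intro σ τ hF
    have h1 : (σ.1 (v0, 0)).1 = (τ.1 (v0, 0)).1 := by
      have : (F σ).1 = (F τ).1 := congrArg Prod.fst hF
      exact this
    have h2 : ∀ v (i : Fin 3), (σ.1 (v, i)).2 = (τ.1 (v, i)).2 := by
      intro v i
      have h3 : (F σ).2 = (F τ).2 := congrArg Prod.snd hF
      have h4 := congrFun h3 v
      exact Equiv.ext_iff.mp h4 i
    obtain ⟨πσ, hπσ⟩ := σ.2.1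
    obtain ⟨πτ, hπτ⟩ := τ.2.1
    -- commuting with f
    have hcσ : ∀ p, σ.1 (f p) = f (σ.1 p) := by
      intro p
      have := mul_inv_eq_iff_eq_mul.mp σ.2.2
      exact congrFun (congrArg (fun g : Equiv.Perm _ => (g : _ → _)) this) p
    have hcτ : ∀ p, τ.1 (f p) = f (τ.1 p) := by
      intro p
      have := mul_inv_eq_iff_eq_mul.mp τ.2.2
      exact congrFun (congrArg (fun g : Equiv.Perm _ => (g : _ → _)) this) p
    set P : Fin (2 * n) → Prop := fun v => ∀ i : Fin 3, σ.1 (v, i) = τ.1 (v, i) with hP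
    -- agreement at one half-edge propagates to the whole vertex
    have vert : ∀ v (i : Fin 3), σ.1 (v, i) = τ.1 (v, i) → P v := by
      intro v i hvi k
      apply Prod.ext _ (h2 v k)
      rw [hπσ (v, k), hπτ (v, k)]
      have : (σ.1 (v, i)).1 = (τ.1 (v, i)).1 := congrArg Prod.fst hvi
      rw [hπσ (v, i), hπτ (v, i)] at this
      exact this
    have hPv0 : P v0 := by
      apply vert v0 0
      apply Prod.ext h1 (h2 v0 0)
    have prop : ∀ v w, G.Adj v w → P v → P w := by
      intro v w hadj hv
      rw [hG, SimpleGraph.fromRel_adj] at hadj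
      obtain ⟨hne, hcase⟩ := hadj
      have hmain : ∃ i j : Fin 3, f (v, i) = (w, j) := by
        rcases hcase with h | ⟨i, j, h⟩
        · exact h
        · refine ⟨j, i, ?_⟩
          have : f (f (w, i)) = (w, i) := by
            have := congrFun (congrArg (fun g : Equiv.Perm _ => (g : _ → _)) hf.1) (w, i)
            simpa using this
          rw [h] at this
          exact this
      obtain ⟨i, j, hij⟩ := hmain
      apply vert w j
      have : σ.1 (f (v, i)) = τ.1 (f (v, i)) := by
        rw [hcσ, hcτ, hv i]
      rwa [hij] at this
    have key : ∀ {u w : Fin (2 * n)} (p : G.Walk u w), P u → P w := by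
      intro u w p
      induction p with
      | nil => exact id
      | cons h _ ih => exact fun hu => ih (prop _ _ h hu)
    have hall : ∀ w, P w := by
      intro w
      obtain ⟨p⟩ := hconn v0 w
      exact key p hPv0
    apply Subtype.ext
    apply Equiv.ext
    rintro ⟨v, i⟩
    exact hall v i
  calc Nat.card S ≤ Nat.card (Fin (2 * n) × (Fin (2 * n) → Equiv.Perm (Fin 3))) :=
        Nat.card_le_card_of_injective F hinj
    _ = 2 * n * 6 ^ (2 * n) := by
        simp [Nat.card_eq_fintype_card, Fintype.card_perm]
        left; rfl
end

section
/- There is a constant c' > 0 such that for every natural number n ≥ 1, the sum of θ(6n, j) over all j with 0 ≤ j ≤ 6n−1 and j ≡ 6n−1 (mod 2) is at most e^{c'n}. -/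
lemma choose_le_two_pow' (n k : ℕ) : n.choose k ≤ 2 ^ n := by
  rcases le_or_gt k n with h | h
  · calc n.choose k ≤ ∑ i ∈ Finset.range (n+1), n.choose i :=
        Finset.single_le_sum (fun i _ => Nat.zero_le _) (Finset.mem_range.2 (by omega))
    _ = 2 ^ n := Nat.sum_range_choose n
  · simp [Nat.choose_eq_zero_of_lt h]

lemma key_nat (N j a b : ℕ) (hN : 6 ≤ N) (hj : j + 1 ≤ N) (hab : a + b = 2 * N - 2) :
    2 * Nat.factorial (2 * j + 3) * Nat.factorial (2 * N - 1) ≤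
      4 * N ^ 2 * 2 ^ (4 * N) *
        (Nat.factorial (j + 2) * Nat.factorial j * Nat.factorial a * Nat.factorial b) := by
  have f1 : Nat.factorial (2 * j + 3)
      = Nat.choose (2 * j + 3) (j + 2) * Nat.factorial (j + 2) * ((j+1) * Nat.factorial j) := by
    have h := Nat.choose_mul_factorial_mul_factorial (show j + 2 ≤ 2 * j + 3 by omega)
    rw [show 2 * j + 3 - (j + 2) = j + 1 by omega] at h
    rw [← h, Nat.factorial_succ j]
  have f2 : Nat.factorial (2 * N - 1)
      = (2 * N - 1) * (Nat.choose (2 * N - 2) a * Nat.factorial a * Nat.factorial b) := by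
    have h := Nat.choose_mul_factorial_mul_factorial (show a ≤ 2 * N - 2 by omega)
    rw [show 2 * N - 2 - a = b by omega] at h
    rw [show 2 * N - 1 = (2 * N - 2) + 1 by omega, Nat.factorial_succ, ← h]
  rw [f1, f2]
  have c1 : Nat.choose (2 * j + 3) (j + 2) ≤ 2 ^ (2 * N + 1) :=
    (choose_le_two_pow' _ _).trans (Nat.pow_le_pow_right (by norm_num) (by omega))
  have c2 : Nat.choose (2 * N - 2) a ≤ 2 ^ (2 * N - 2) := choose_le_two_pow' _ _
  calc 2 * (Nat.choose (2 * j + 3) (j + 2) * Nat.factorial (j + 2) * ((j+1) * Nat.factorial j)) *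
        ((2 * N - 1) * (Nat.choose (2 * N - 2) a * Nat.factorial a * Nat.factorial b))
      ≤ 2 * (2 ^ (2 * N + 1) * Nat.factorial (j + 2) * (N * Nat.factorial j)) *
        ((2 * N) * (2 ^ (2 * N - 2) * Nat.factorial a * Nat.factorial b)) := by
        gcongr <;> omega
    _ = (4 * N ^ 2 * (2 ^ (2 * N + 1) * 2 ^ (2 * N - 2))) *
        (Nat.factorial (j + 2) * Nat.factorial j * Nat.factorial a * Nat.factorial b) := by ring
    _ ≤ 4 * N ^ 2 * 2 ^ (4 * N) *
        (Nat.factorial (j + 2) * Nat.factorial j * Nat.factorial a * Nat.factorial b) := by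
        gcongr
        rw [← pow_add]
        exact Nat.pow_le_pow_right (by norm_num) (by omega)

/-- Brown's count of rooted simplicial triangulations of the disk with `n` triangles and
`j + 3` boundary vertices:
`θ(n,j) = 2·(2j+3)!·(2n−1)! / ((j+2)!·j!·((n−j−1)/2)!·((3n+j−3)/2)!)`. -/
noncomputable def theta (n j : ℕ) : ℝ :=
  2 * Nat.factorial (2 * j + 3) * Nat.factorial (2 * n - 1) /
    (Nat.factorial (j + 2) * Nat.factorial j *
      Nat.factorial ((n - j - 1) / 2) * Nat.factorial ((3 * n + j - 3) / 2))

lemma theta_term_le (n j : ℕ) (hn : 1 ≤ n) (hj : j < 6 * n)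
    (hp : j % 2 = (6 * n - 1) % 2) :
    theta (6 * n) j ≤ ((4 * (6 * n) ^ 2 * 2 ^ (4 * (6 * n)) : ℕ) : ℝ) := by
  have hab : (6 * n - j - 1) / 2 + (3 * (6 * n) + j - 3) / 2 = 2 * (6 * n) - 2 := by omega
  have key := key_nat (6 * n) j ((6 * n - j - 1) / 2) ((3 * (6 * n) + j - 3) / 2)
    (by omega) (by omega) hab
  rw [theta, div_le_iff₀ (by positivity)]
  calc (2 : ℝ) * Nat.factorial (2 * j + 3) * Nat.factorial (2 * (6 * n) - 1)
      = ((2 * Nat.factorial (2 * j + 3) * Nat.factorial (2 * (6 * n) - 1) : ℕ) : ℝ) := by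
        push_cast; ring
    _ ≤ ((4 * (6 * n) ^ 2 * 2 ^ (4 * (6 * n)) *
        (Nat.factorial (j + 2) * Nat.factorial j *
          Nat.factorial ((6 * n - j - 1) / 2) *
          Nat.factorial ((3 * (6 * n) + j - 3) / 2)) : ℕ) : ℝ) := by exact_mod_cast key
    _ = _ := by push_cast; ring

/-- There is a constant `c' > 0` such that for every `n ≥ 1`, the sum of `θ(6n, j)` over
all `j` with `0 ≤ j ≤ 6n − 1` and `j ≡ 6n − 1 (mod 2)` is at most `e^{c'n}`. -/
theorem sum_theta_le_exp :
    ∃ c' : ℝ, 0 < c' ∧ ∀ n : ℕ, 1 ≤ n →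
      ∑ j ∈ (Finset.range (6 * n)).filter (fun j => j % 2 = (6 * n - 1) % 2),
        theta (6 * n) j ≤ Real.exp (c' * n) := by
  refine ⟨44, by norm_num, fun n hn => ?_⟩
  set s := (Finset.range (6 * n)).filter (fun j => j % 2 = (6 * n - 1) % 2) with hs
  have hB : ∀ j ∈ s, theta (6 * n) j ≤ ((4 * (6 * n) ^ 2 * 2 ^ (4 * (6 * n)) : ℕ) : ℝ) := by
    intro j hj
    rw [hs, Finset.mem_filter, Finset.mem_range] at hj
    exact theta_term_le n j hn hj.1 hj.2
  have hcard : s.card ≤ 6 * n := by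
    calc s.card ≤ (Finset.range (6 * n)).card := Finset.card_le_card (Finset.filter_subset _ _)
      _ = 6 * n := Finset.card_range _
  have hnat : 6 * n * (4 * (6 * n) ^ 2 * 2 ^ (4 * (6 * n))) ≤ 2 ^ (44 * n) := by
    calc 6 * n * (4 * (6 * n) ^ 2 * 2 ^ (4 * (6 * n)))
        = 4 * (6 * n) ^ 3 * 2 ^ (24 * n) := by ring_nf
      _ ≤ 4 * (2 ^ (6 * n)) ^ 3 * 2 ^ (24 * n) := by
          gcongr
          exact (Nat.lt_two_pow_self (n := 6 * n)).le
      _ = 2 ^ (2 + 18 * n + 24 * n) := by rw [pow_add, pow_add, ← pow_mul]; ring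
      _ ≤ 2 ^ (44 * n) := Nat.pow_le_pow_right (by norm_num) (by omega)
  calc ∑ j ∈ s, theta (6 * n) j
      ≤ s.card • ((4 * (6 * n) ^ 2 * 2 ^ (4 * (6 * n)) : ℕ) : ℝ) :=
        Finset.sum_le_card_nsmul s _ _ hB
    _ = ((s.card * (4 * (6 * n) ^ 2 * 2 ^ (4 * (6 * n))) : ℕ) : ℝ) := by
        push_cast [nsmul_eq_mul]; ring
    _ ≤ ((2 ^ (44 * n) : ℕ) : ℝ) := by
        exact_mod_cast le_trans (Nat.mul_le_mul_right _ hcard) hnat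
    _ ≤ (Real.exp 1) ^ (44 * n) := by
        push_cast
        exact pow_le_pow_left₀ (by norm_num) (by linarith [Real.add_one_le_exp 1]) _
    _ = Real.exp (44 * n) := by rw [Real.exp_one_pow]; push_cast; ring_nf
end

section
/- For every real ε with 0 < ε < 1/3 and every real c > 0, there exists a constant C > 0 such that for all natural numbers N ≥ 8: Σ_{i=2}^{⌊(N+2)/4⌋} e^{cN}·(N^{7/6−ε}/i)^{6i}·i^{i} ≤ C·e^{CN}·N^{(1/2 − (3/2)ε)·N}. -/
/-- For every real `ε` with `0 < ε < 1/3` and every real `c > 0`, there is a constant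
`C > 0` such that for all naturals `N ≥ 8`:
`Σ_{i=2}^{⌊(N+2)/4⌋} e^{cN}·(N^{7/6−ε}/i)^{6i}·i^i ≤ C·e^{CN}·N^{(1/2 − (3/2)ε)·N}`. -/
theorem sum_pants_count_le (ε : ℝ) (hε0 : 0 < ε) (hε : ε < 1 / 3)
    (c : ℝ) (hc : 0 < c) :
    ∃ C : ℝ, 0 < C ∧ ∀ N : ℕ, 8 ≤ N →
      ∑ i ∈ Finset.Icc 2 ((N + 2) / 4),
          Real.exp (c * N) * ((N : ℝ) ^ ((7 : ℝ) / 6 - ε) / i) ^ (6 * i) * (i : ℝ) ^ i ≤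
        C * Real.exp (C * N) * (N : ℝ) ^ (((1 : ℝ) / 2 - (3 / 2) * ε) * N) := by
  refine ⟨c + 7, by linarith, fun N hN => ?_⟩
  have hN8 : (8 : ℝ) ≤ (N : ℝ) := by exact_mod_cast hN
  have hN0 : (0 : ℝ) < (N : ℝ) := by linarith
  set δ : ℝ := (1 : ℝ) / 2 - (3 / 2) * ε with hδ
  clear_value δ
  have hδ0 : 0 < δ := by rw [hδ]; linarith
  set L : ℝ := Real.log N with hL
  clear_value L
  have hL0 : 0 ≤ L := by rw [hL]; exact Real.log_nonneg (by linarith)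
  have hLN : L ≤ (N : ℝ) := by
    rw [hL]; linarith [Real.log_le_sub_one_of_pos hN0]
  have key : ∀ i ∈ Finset.Icc 2 ((N + 2) / 4),
      Real.exp (c * N) * ((N : ℝ) ^ ((7 : ℝ) / 6 - ε) / i) ^ (6 * i) * (i : ℝ) ^ i ≤
        Real.exp ((c + 6) * N) * (N : ℝ) ^ (δ * N) := by
    intro i hi
    obtain ⟨hi2, hiM⟩ := Finset.mem_Icc.mp hi
    have hi2' : (2 : ℝ) ≤ (i : ℝ) := by exact_mod_cast hi2
    have hi0 : (0 : ℝ) < (i : ℝ) := by linarith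
    have hi4 : (4 : ℝ) * (i : ℝ) ≤ (N : ℝ) + 2 := by
      have h4 : 4 * i ≤ N + 2 := by omega
      exact_mod_cast by exact_mod_cast h4
    have hx0 : (0 : ℝ) < (N : ℝ) ^ ((7 : ℝ) / 6 - ε) / i :=
      div_pos (Real.rpow_pos_of_pos hN0 _) hi0
    -- rewrite the term as an exponential
    have hterm : Real.exp (c * N) * ((N : ℝ) ^ ((7 : ℝ) / 6 - ε) / i) ^ (6 * i) * (i : ℝ) ^ i
        = Real.exp (c * N + (6 * i : ℕ) * Real.log ((N : ℝ) ^ ((7 : ℝ) / 6 - ε) / i)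
            + (i : ℕ) * Real.log i) := by
      rw [Real.exp_add, Real.exp_add]
      congr 1
      · congr 1
        rw [Real.exp_nat_mul, Real.exp_log hx0]
      · rw [Real.exp_nat_mul, Real.exp_log hi0]
    have hrhs : Real.exp ((c + 6) * N) * (N : ℝ) ^ (δ * N)
        = Real.exp ((c + 6) * N + L * (δ * N)) := by
      rw [Real.exp_add, Real.rpow_def_of_pos hN0, hL]
    rw [hterm, hrhs]
    apply Real.exp_le_exp.mpr
    have hlogx : Real.log ((N : ℝ) ^ ((7 : ℝ) / 6 - ε) / i)
        = ((7 : ℝ) / 6 - ε) * L - Real.log i := by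
      rw [Real.log_div (ne_of_gt (Real.rpow_pos_of_pos hN0 _)) (ne_of_gt hi0),
        Real.log_rpow hN0, hL]
    rw [hlogx]
    push_cast
    -- key elementary estimates
    have h2 : (i : ℝ) * (L - Real.log i) ≤ (N : ℝ) - i := by
      have h1 : L - Real.log i ≤ (N : ℝ) / i - 1 := by
        have hpos : (0 : ℝ) < (N : ℝ) / i := div_pos hN0 hi0
        have := Real.log_le_sub_one_of_pos hpos
        rw [Real.log_div (ne_of_gt hN0) (ne_of_gt hi0)] at this
        linarith
      have hmul := mul_le_mul_of_nonneg_left h1 hi0.le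
      have hiN : (i : ℝ) * ((N : ℝ) / i - 1) = (N : ℝ) - i := by
        field_simp
      linarith [hmul, hiN.le, hiN.ge]
    have b2 : (2 - 6 * ε) * ((i : ℝ) * L) ≤ δ * ((N : ℝ) * L) + (N : ℝ) := by
      have h3 : (2 - 6 * ε) * ((i : ℝ) * L) ≤ (2 - 6 * ε) * (((N : ℝ) + 2) / 4 * L) := by
        apply mul_le_mul_of_nonneg_left _ (by linarith)
        apply mul_le_mul_of_nonneg_right _ hL0
        linarith
      have h4 : (2 - 6 * ε) * (((N : ℝ) + 2) / 4 * L) = δ * ((N : ℝ) * L) + 2 * δ * L := by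
        rw [hδ]; ring
      have h5 : 2 * δ * L ≤ (N : ℝ) := by
        have : 2 * δ ≤ 1 := by rw [hδ]; linarith
        nlinarith [hL0, hLN]
      linarith
    nlinarith [h2, b2]
  calc ∑ i ∈ Finset.Icc 2 ((N + 2) / 4),
          Real.exp (c * N) * ((N : ℝ) ^ ((7 : ℝ) / 6 - ε) / i) ^ (6 * i) * (i : ℝ) ^ i
      ≤ (Finset.Icc 2 ((N + 2) / 4)).card •
          (Real.exp ((c + 6) * N) * (N : ℝ) ^ (δ * N)) :=
        Finset.sum_le_card_nsmul _ _ _ key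
    _ ≤ (N : ℝ) * (Real.exp ((c + 6) * N) * (N : ℝ) ^ (δ * N)) := by
        rw [nsmul_eq_mul]
        apply mul_le_mul_of_nonneg_right _ (by positivity)
        have : (Finset.Icc 2 ((N + 2) / 4)).card ≤ N := by
          rw [Nat.card_Icc]; omega
        exact_mod_cast this
    _ ≤ Real.exp (N : ℝ) * (Real.exp ((c + 6) * N) * (N : ℝ) ^ (δ * N)) := by
        apply mul_le_mul_of_nonneg_right _ (by positivity)
        linarith [Real.add_one_le_exp (N : ℝ)]
    _ = Real.exp ((c + 7) * N) * (N : ℝ) ^ (δ * N) := by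
        rw [← mul_assoc, ← Real.exp_add]; ring_nf
    _ ≤ (c + 7) * Real.exp ((c + 7) * N) * (N : ℝ) ^ (δ * N) := by
        apply mul_le_mul_of_nonneg_right _ (by positivity)
        nlinarith [Real.exp_pos ((c + 7) * N)]
end
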